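/- Let G and H be finite graphs each having at least one edge. Then Γ(G × H) ≥ Γ(G) + Γ(H) − 2. -/

import Mathlib

open SimpleGraph

/-- A greedy `k`-coloring of `G`: a partition of the vertex set into nonempty stable sets
`S 0, …, S (k-1)` such that for all `j < i`, every vertex of `S i` has a neighbor in `S j`. -/
def IsGreedyColoring {V : Type*} (G : SimpleGraph V) (k : ℕ) (S : Fin k → Set V) : Prop :=
  (∀ v : V, ∃! i, v ∈ S i) ∧
  (∀ i, (S i).Nonempty) ∧
  (∀ i, ∀ v ∈ S i, ∀ w ∈ S i, ¬ G.Adj v w) ∧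
  (∀ i j : Fin k, j < i → ∀ v ∈ S i, ∃ w ∈ S j, G.Adj v w)

/-- The Grundy number `Γ(G)`: the largest `k` such that `G` has a greedy `k`-coloring. -/
noncomputable def grundy {V : Type*} [Fintype V] (G : SimpleGraph V) : ℕ :=
  sSup {k | ∃ S : Fin k → Set V, IsGreedyColoring G k S}

/-- Direct (tensor) product `G × H`: `(a,x)` adjacent to `(b,y)` iff
`ab ∈ E(G)` and `xy ∈ E(H)`. -/
def tensorProd {α β : Type*} (G : SimpleGraph α) (H : SimpleGraph β) :
    SimpleGraph (α × β) where
  Adj x y := G.Adj x.1 y.1 ∧ H.Adj x.2 y.2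
  symm := ⟨fun _ _ h => ⟨G.adj_symm h.1, H.adj_symm h.2⟩⟩
  loopless := ⟨fun _ h => G.irrefl h.1⟩

/-!
Work with greedy colorings as maps `c : V → ℕ`. Write `Γ(G) = n + 2` and fix greedy colorings
`cG`, `cH` of `G` and `H` with `n + 2` and `Γ(H) ≥ 2` colors. Let `D = topPart G cG n` consist
of the vertices of color `n + 1` and those of color `n` adjacent to color `n + 1`: every vertex
of `D` has a neighbor in `D`, and a vertex of color `n` outside `D` has no neighbor of color
`n + 1`. Color `(a, x)` by `0` if `x` is isolated, by `n + cH x` if `a ∈ D`, and by `cG a`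
otherwise. Below `n` the greedy condition is inherited from `cG`, from `n` on from `cH`, and
the result is a greedy coloring of `G × H` with `n + Γ(H)` colors.
-/

section

variable {V α β : Type*}

structure IsGreedyColorMap (G : SimpleGraph V) (k : ℕ) (c : V → ℕ) : Prop where
  lt : ∀ v, c v < k
  exists_eq : ∀ i < k, ∃ v, c v = i
  ne_of_adj : ∀ {v w}, G.Adj v w → c v ≠ c w
  exists_adj_eq : ∀ v, ∀ j < c v, ∃ w, G.Adj v w ∧ c w = j

section ColorMap

variable {G : SimpleGraph V} {k : ℕ}

theorem IsGreedyColorMap.isGreedyColoring {c : V → ℕ} (hc : IsGreedyColorMap G k c) :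
    IsGreedyColoring G k (fun i => {v | c v = i}) := by
  refine ⟨fun v => ⟨⟨c v, hc.lt v⟩, rfl, fun i hi => Fin.ext hi.symm⟩,
    fun i => hc.exists_eq i i.isLt, fun i v hv w hw hvw => hc.ne_of_adj hvw (hv.trans hw.symm),
    fun i j hji v hv => ?_⟩
  obtain ⟨w, hvw, hw⟩ := hc.exists_adj_eq v j (hv ▸ hji)
  exact ⟨w, hw, hvw⟩

theorem IsGreedyColoring.exists_isGreedyColorMap {S : Fin k → Set V}
    (hS : IsGreedyColoring G k S) : ∃ c, IsGreedyColorMap G k c := by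
  obtain ⟨hpart, hne, hstable, hgreedy⟩ := hS
  choose c hc hc_unique using hpart
  refine ⟨fun v => c v, fun v => (c v).isLt, fun i hi => ?_, fun {v w} hvw hcvw => ?_,
    fun v j hj => ?_⟩
  · obtain ⟨v, hv⟩ := hne ⟨i, hi⟩
    exact ⟨v, congrArg Fin.val (hc_unique v _ hv).symm⟩
  · exact hstable (c v) v (hc v) w (Fin.ext hcvw ▸ hc w) hvw
  · obtain ⟨w, hw, hvw⟩ := hgreedy (c v) ⟨j, hj.trans (c v).isLt⟩ hj v (hc v)
    exact ⟨w, hvw, congrArg Fin.val (hc_unique w _ hw).symm⟩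

theorem exists_isGreedyColoring_iff :
    (∃ S, IsGreedyColoring G k S) ↔ ∃ c, IsGreedyColorMap G k c :=
  ⟨fun ⟨_, hS⟩ => hS.exists_isGreedyColorMap, fun ⟨_, hc⟩ => ⟨_, hc.isGreedyColoring⟩⟩

theorem IsGreedyColorMap.two_le {c : V → ℕ} (hc : IsGreedyColorMap G k c) {u v : V}
    (huv : G.Adj u v) : 2 ≤ k := by
  have := hc.ne_of_adj huv
  have := hc.lt u
  have := hc.lt v
  omega

variable [Fintype V]

theorem IsGreedyColorMap.le_card {c : V → ℕ} (hc : IsGreedyColorMap G k c) :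
    k ≤ Fintype.card V := by
  classical
  calc k = (Finset.range k).card := (Finset.card_range k).symm
    _ ≤ (Finset.univ.image c).card := Finset.card_le_card fun i hi => by
        obtain ⟨v, hv⟩ := hc.exists_eq i (Finset.mem_range.mp hi)
        exact Finset.mem_image.mpr ⟨v, Finset.mem_univ v, hv⟩
    _ ≤ Fintype.card V := Finset.card_image_le

/-- A proper coloring minimizing the sum of the colors exists, and it is greedy at every vertex:
a vertex missing a smaller color among its neighbors could be recolored with it. -/
theorem exists_proper_forall_exists_adj_eq (G : SimpleGraph V) :
    ∃ c : V → ℕ, (∀ v w, G.Adj v w → c v ≠ c w) ∧ ∀ v, ∀ j < c v, ∃ w, G.Adj v w ∧ c w = j := by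
  classical
  set proper : Set (V → ℕ) := {c | ∀ v w, G.Adj v w → c v ≠ c w}
  have hproper : proper.Nonempty := ⟨fun v => Fintype.equivFin V v,
    fun v w hvw h => G.ne_of_adj hvw ((Fintype.equivFin V).injective (Fin.ext h))⟩
  set c := Function.argminOn (fun c : V → ℕ => ∑ v, c v) proper hproper
  have hc : c ∈ proper := Function.argminOn_mem _ _ hproper
  refine ⟨c, hc, fun v j hj => ?_⟩
  by_contra! hno
  have hupdate : Function.update c v j ∈ proper := by
    intro u w huw
    by_cases hu : u = v <;> by_cases hw : w = v
    · exact absurd (hu.trans hw.symm) (G.ne_of_adj huw)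
    · subst hu
      simpa [hw] using (hno w huw).symm
    · subst hw
      simpa [hu] using hno u huw.symm
    · simpa [hu, hw] using hc u w huw
  have hlt : ∑ u, Function.update c v j u < ∑ u, c u := by
    refine Finset.sum_lt_sum (fun u _ => ?_) ⟨v, Finset.mem_univ v, by simpa using hj⟩
    rcases eq_or_ne u v with rfl | hu
    · simpa using hj.le
    · simp [hu]
  exact (Function.argminOn_le (fun c : V → ℕ => ∑ v, c v) proper hupdate).not_gt hlt

theorem isGreedyColorMap_of_forall_exists_adj_eq {c : V → ℕ}
    (hproper : ∀ v w, G.Adj v w → c v ≠ c w) (hgreedy : ∀ v, ∀ j < c v, ∃ w, G.Adj v w ∧ c w = j) :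
    IsGreedyColorMap G (Finset.univ.sup fun v => c v + 1) c := by
  refine ⟨fun v => Nat.lt_of_succ_le (Finset.le_sup (f := fun v => c v + 1) (Finset.mem_univ v)),
    fun i hi => ?_, fun {v w} hvw => hproper v w hvw, hgreedy⟩
  obtain ⟨v, -, hv⟩ := Finset.lt_sup_iff.mp hi
  rcases (Nat.lt_succ_iff.mp hv).lt_or_eq with hiv | rfl
  · obtain ⟨w, -, hw⟩ := hgreedy v i hiv
    exact ⟨w, hw⟩
  · exact ⟨v, rfl⟩

theorem grundy_eq_sSup_isGreedyColorMap (G : SimpleGraph V) :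
    grundy G = sSup {k | ∃ c, IsGreedyColorMap G k c} := by
  simp only [grundy, exists_isGreedyColoring_iff]

theorem bddAbove_isGreedyColorMap (G : SimpleGraph V) :
    BddAbove {k | ∃ c, IsGreedyColorMap G k c} :=
  ⟨Fintype.card V, fun _ ⟨_, hc⟩ => hc.le_card⟩

theorem IsGreedyColorMap.le_grundy {c : V → ℕ} (hc : IsGreedyColorMap G k c) :
    k ≤ grundy G :=
  grundy_eq_sSup_isGreedyColorMap G ▸ le_csSup (bddAbove_isGreedyColorMap G) ⟨c, hc⟩

theorem exists_isGreedyColorMap_grundy (G : SimpleGraph V) :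
    ∃ c, IsGreedyColorMap G (grundy G) c := by
  obtain ⟨c, hproper, hgreedy⟩ := exists_proper_forall_exists_adj_eq G
  have hc := isGreedyColorMap_of_forall_exists_adj_eq hproper hgreedy
  rw [grundy_eq_sSup_isGreedyColorMap]
  exact Nat.sSup_mem (s := {k | ∃ c, IsGreedyColorMap G k c}) ⟨_, c, hc⟩
    (bddAbove_isGreedyColorMap G)

end ColorMap

def topPart (G : SimpleGraph α) (c : α → ℕ) (n : ℕ) : Set α :=
  {a | c a = n + 1 ∨ c a = n ∧ ∃ b, G.Adj a b ∧ c b = n + 1}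

section Product

variable {G : SimpleGraph α} {H : SimpleGraph β} {n h : ℕ} {cG : α → ℕ} {cH : β → ℕ}
  {a b : α} {x y : β}

theorem le_of_mem_topPart (ha : a ∈ topPart G cG n) : n ≤ cG a := by
  rcases ha with ha | ⟨ha, -⟩ <;> omega

theorem mem_topPart_or_eq_of_adj (ha : a ∈ topPart G cG n) (hab : G.Adj a b) (hb : cG b = n) :
    b ∈ topPart G cG n ∨ cG a = n := by
  rcases ha with ha | ⟨ha, -⟩
  · exact Or.inl (Or.inr ⟨hb, a, hab.symm, ha⟩)
  · exact Or.inr ha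

theorem IsGreedyColorMap.le_of_notMem_topPart (hG : IsGreedyColorMap G (n + 2) cG)
    (ha : a ∉ topPart G cG n) : cG a ≤ n := by
  have := hG.lt a
  have : cG a ≠ n + 1 := fun h => ha (Or.inl h)
  omega

theorem IsGreedyColorMap.exists_adj_mem_topPart (hG : IsGreedyColorMap G (n + 2) cG)
    (ha : a ∈ topPart G cG n) : ∃ b ∈ topPart G cG n, G.Adj a b := by
  rcases ha with ha | ⟨-, b, hab, hb⟩
  · obtain ⟨b, hab, hb⟩ := hG.exists_adj_eq a n (by omega)
    exact ⟨b, Or.inr ⟨hb, a, hab.symm, ha⟩, hab⟩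
  · exact ⟨b, Or.inl hb, hab⟩

theorem IsGreedyColorMap.exists_adj_and_eq {c : α → ℕ} {k i : ℕ}
    (hc : IsGreedyColorMap G k c) (hk : 2 ≤ k) (hi : i < k) : ∃ a b, G.Adj a b ∧ c a = i := by
  rcases Nat.eq_zero_or_pos i with rfl | hi0
  · obtain ⟨b, hb⟩ := hc.exists_eq 1 hk
    obtain ⟨a, hba, ha⟩ := hc.exists_adj_eq b 0 (by omega)
    exact ⟨a, b, hba.symm, ha⟩
  · obtain ⟨a, ha⟩ := hc.exists_eq i hi
    obtain ⟨b, hab, -⟩ := hc.exists_adj_eq a 0 (by omega)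
    exact ⟨a, b, hab, ha⟩

noncomputable def productColor (G : SimpleGraph α) (H : SimpleGraph β) (cG : α → ℕ)
    (cH : β → ℕ) (n : ℕ) (p : α × β) : ℕ :=
  open Classical in
  if ∃ y, H.Adj p.2 y then
    if p.1 ∈ topPart G cG n then n + cH p.2 else cG p.1
  else 0

theorem productColor_of_isolated (hx : ∀ y, ¬ H.Adj x y) :
    productColor G H cG cH n (a, x) = 0 := by
  simp [productColor, hx]

theorem productColor_of_mem (hxy : H.Adj x y) (ha : a ∈ topPart G cG n) :
    productColor G H cG cH n (a, x) = n + cH x := by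
  simp [productColor, ha, show ∃ y, H.Adj x y from ⟨y, hxy⟩]

theorem productColor_of_notMem (hxy : H.Adj x y) (ha : a ∉ topPart G cG n) :
    productColor G H cG cH n (a, x) = cG a := by
  simp [productColor, ha, show ∃ y, H.Adj x y from ⟨y, hxy⟩]

theorem productColor_lt (hG : IsGreedyColorMap G (n + 2) cG) (hH : IsGreedyColorMap H h cH)
    (p : α × β) : productColor G H cG cH n p < n + h := by
  obtain ⟨a, x⟩ := p
  have := hH.lt x
  by_cases hx : ∃ y, H.Adj x y
  · obtain ⟨y, hxy⟩ := hx
    by_cases ha : a ∈ topPart G cG n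
    · rw [productColor_of_mem hxy ha]
      omega
    · rw [productColor_of_notMem hxy ha]
      have := hG.le_of_notMem_topPart ha
      omega
  · rw [productColor_of_isolated (not_exists.mp hx)]
    omega

theorem exists_productColor_eq (hG : IsGreedyColorMap G (n + 2) cG)
    (hH : IsGreedyColorMap H h cH) (hh : 2 ≤ h) (i : ℕ) (hi : i < n + h) :
    ∃ p, productColor G H cG cH n p = i := by
  rcases lt_or_ge i n with hin | hni
  · obtain ⟨a, ha⟩ := hG.exists_eq i (by omega)
    have ha' : a ∉ topPart G cG n := fun h => by have := le_of_mem_topPart h; omega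
    obtain ⟨x, y, hxy, -⟩ := hH.exists_adj_and_eq hh (i := 0) (by omega)
    exact ⟨(a, x), (productColor_of_notMem hxy ha').trans ha⟩
  · obtain ⟨a, ha⟩ := hG.exists_eq (n + 1) (by omega)
    obtain ⟨x, y, hxy, hx⟩ := hH.exists_adj_and_eq hh (i := i - n) (by omega)
    refine ⟨(a, x), ?_⟩
    rw [productColor_of_mem hxy (Or.inl ha)]
    omega

theorem productColor_ne_of_adj_of_mem_of_notMem (hG : IsGreedyColorMap G (n + 2) cG)
    (hab : G.Adj a b) (hxy : H.Adj x y) (ha : a ∈ topPart G cG n) (hb : b ∉ topPart G cG n) :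
    productColor G H cG cH n (a, x) ≠ productColor G H cG cH n (b, y) := by
  rw [productColor_of_mem hxy ha, productColor_of_notMem hxy.symm hb]
  intro heq
  have := hG.le_of_notMem_topPart hb
  rcases mem_topPart_or_eq_of_adj ha hab (by omega) with hb' | ha'
  · exact hb hb'
  · exact hG.ne_of_adj hab (by omega)

theorem productColor_ne_of_adj (hG : IsGreedyColorMap G (n + 2) cG)
    (hH : IsGreedyColorMap H h cH) {p q : α × β} (hpq : (tensorProd G H).Adj p q) :
    productColor G H cG cH n p ≠ productColor G H cG cH n q := by
  obtain ⟨a, x⟩ := p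
  obtain ⟨b, y⟩ := q
  obtain ⟨hab, hxy⟩ := hpq
  by_cases ha : a ∈ topPart G cG n <;> by_cases hb : b ∈ topPart G cG n
  · rw [productColor_of_mem hxy ha, productColor_of_mem hxy.symm hb]
    have := hH.ne_of_adj hxy
    omega
  · exact productColor_ne_of_adj_of_mem_of_notMem hG hab hxy ha hb
  · exact (productColor_ne_of_adj_of_mem_of_notMem hG hab.symm hxy.symm hb ha).symm
  · rw [productColor_of_notMem hxy ha, productColor_of_notMem hxy.symm hb]
    exact hG.ne_of_adj hab

theorem exists_adj_productColor_eq (hG : IsGreedyColorMap G (n + 2) cG)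
    (hH : IsGreedyColorMap H h cH) (p : α × β) (j : ℕ) (hj : j < productColor G H cG cH n p) :
    ∃ q, (tensorProd G H).Adj p q ∧ productColor G H cG cH n q = j := by
  obtain ⟨a, x⟩ := p
  obtain ⟨y, hxy⟩ : ∃ y, H.Adj x y := by
    by_contra! hx
    rw [productColor_of_isolated hx] at hj
    omega
  have below_n : j < cG a → j < n → ∃ q, (tensorProd G H).Adj (a, x) q ∧
      productColor G H cG cH n q = j := fun hja hjn => by
    obtain ⟨b, hab, hb⟩ := hG.exists_adj_eq a j hja
    have hb' : b ∉ topPart G cG n := fun h => by have := le_of_mem_topPart h; omega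
    exact ⟨(b, y), ⟨hab, hxy⟩, (productColor_of_notMem hxy.symm hb').trans hb⟩
  by_cases ha : a ∈ topPart G cG n
  · rw [productColor_of_mem hxy ha] at hj
    rcases lt_or_ge j n with hjn | hnj
    · exact below_n (by have := le_of_mem_topPart ha; omega) hjn
    · obtain ⟨y', hxy', hy'⟩ := hH.exists_adj_eq x (j - n) (by omega)
      obtain ⟨b, hb, hab⟩ := hG.exists_adj_mem_topPart ha
      refine ⟨(b, y'), ⟨hab, hxy'⟩, ?_⟩
      rw [productColor_of_mem hxy'.symm hb]
      omega
  · rw [productColor_of_notMem hxy ha] at hj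
    exact below_n hj (by have := hG.le_of_notMem_topPart ha; omega)

theorem IsGreedyColorMap.tensorProd (hG : IsGreedyColorMap G (n + 2) cG)
    (hH : IsGreedyColorMap H h cH) (hh : 2 ≤ h) :
    IsGreedyColorMap (tensorProd G H) (n + h) (productColor G H cG cH n) :=
  ⟨productColor_lt hG hH, exists_productColor_eq hG hH hh, productColor_ne_of_adj hG hH,
    exists_adj_productColor_eq hG hH⟩

end Product

end

/-- If `G` and `H` are finite graphs each having at least one edge, then
`Γ(G × H) ≥ Γ(G) + Γ(H) − 2`. -/
theorem grundy_tensorProd_ge {α β : Type*} [Fintype α] [Fintype β]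
    (G : SimpleGraph α) (H : SimpleGraph β)
    (hG : ∃ u v, G.Adj u v) (hH : ∃ u v, H.Adj u v) :
    grundy (tensorProd G H) ≥ grundy G + grundy H - 2 := by
  obtain ⟨cG, hcG⟩ := exists_isGreedyColorMap_grundy G
  obtain ⟨cH, hcH⟩ := exists_isGreedyColorMap_grundy H
  obtain ⟨u, v, huv⟩ := hG
  obtain ⟨x, y, hxy⟩ := hH
  obtain ⟨n, hn⟩ : ∃ n, grundy G = n + 2 := ⟨grundy G - 2, by have := hcG.two_le huv; omega⟩
  rw [hn] at hcG
  have := (hcG.tensorProd hcH (hcH.two_le hxy)).le_grundy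
  omega
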